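/- (Leibniz rule for the q-product.) Let f(x,y) = Σ_{i=0}^r f_i(m) y^i x^{r−i} and g(x,y) = Σ_{j=0}^s g_j(m) y^j x^{s−j} be homogeneous polynomials of degrees r and s with parameter m. Then for every ν ≥ 1, the ν-th q-derivative with respect to x of the q-product f*g satisfies (f*g)^{(ν)} = Σ_{l=0}^{ν} [ν,l]_q · q^{(ν−l)(r−l)} · (f^{(l)}) * (g^{(ν−l)}), as an identity of homogeneous polynomials of degree r+s−ν with parameter m. -/

import Mathlib

/-!
Applying the `q`-derivative once to a `q`-product gives a two-term `q`-product rule: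
on the coefficient of `y^u`, the factor `[r+s-u]_q` splits as `q^a [b]_q + [a]_q`,
where `a` and `b` are the remaining `x`-degrees of the two factors. Iterating it, the
coefficients of `(f*g)^{(ν)}` satisfy the recursion of the `q`-Pascal rule
`[ν+1,l+1]_q = [ν,l+1]_q + q^{ν-l} [ν,l]_q`, and the claim follows by induction on `ν`.
-/

open Finset

/-- `α(m,u) = ∏_{i=0}^{u-1} (q^m - q^i)`, with `q^m` the real power (integer exponent `m`). -/
noncomputable def alphaR (q : ℝ) (m : ℤ) (u : ℕ) : ℝ :=
  ∏ i ∈ Finset.range u, (q ^ m - q ^ (i : ℤ))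

/-- Gaussian binomial `[n,u]_q = α(n,u)/α(u,u)` (which is `0` when `u > n`). -/
noncomputable def gaussR (q : ℝ) (n u : ℕ) : ℝ :=
  alphaR q n u / alphaR q u u

/-- A homogeneous polynomial in `x,y` with integer parameter `m` is modelled by its
family of coefficients `f m i` (the coefficient of `y^i x^{deg - i}`).
The `q`-product of `f` (degree `r`) and `g` (degree `s`) has coefficients
`c_u(m) = Σ_{i=0}^u q^{i·s} f_i(m) g_{u-i}(m-i)`. -/
noncomputable def qmulCoeff (q : ℝ) (s : ℕ) (f g : ℤ → ℕ → ℝ) : ℤ → ℕ → ℝ :=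
  fun m u => ∑ i ∈ Finset.range (u + 1), q ^ (i * s) * f m i * g (m - i) (u - i)

/-- The `q`-derivative with respect to `x` of a degree-`r` homogeneous polynomial,
at the level of coefficients: `(f^{(1)})_i(m) = f_i(m) · (q^{r-i} - 1)/(q - 1)`
(the coefficient of `y^i x^{r-1-i}`). -/
noncomputable def qderivCoeff (q : ℝ) (r : ℕ) (f : ℤ → ℕ → ℝ) : ℤ → ℕ → ℝ :=
  fun m i => f m i * ((q ^ (r - i) - 1) / (q - 1))

/-- The `ν`-th `q`-derivative with respect to `x` of a degree-`r` homogeneous polynomial. -/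
noncomputable def qdIter (q : ℝ) : ℕ → ℕ → (ℤ → ℕ → ℝ) → (ℤ → ℕ → ℝ)
  | _, 0, f => f
  | r, ν + 1, f => qdIter q (r - 1) ν (qderivCoeff q r f)

def IsHomogeneous (r : ℕ) (f : ℤ → ℕ → ℝ) : Prop :=
  ∀ m i, r < i → f m i = 0

lemma alphaR_succ (q : ℝ) (m : ℤ) (l : ℕ) :
    alphaR q m (l + 1) = alphaR q m l * (q ^ m - q ^ (l : ℤ)) :=
  prod_range_succ _ _

lemma alphaR_succ_succ (q : ℝ) (n l : ℕ) :
    alphaR q ((n + 1 : ℕ) : ℤ) (l + 1) = (q ^ (n + 1) - 1) * q ^ l * alphaR q n l := by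
  unfold alphaR
  rw [prod_range_succ']
  have hshift : ∀ i ∈ range l,
      q ^ ((n + 1 : ℕ) : ℤ) - q ^ ((i + 1 : ℕ) : ℤ) = q * (q ^ (n : ℤ) - q ^ (i : ℤ)) := by
    intro i _
    simp only [zpow_natCast]
    ring
  rw [prod_congr rfl hshift, prod_mul_distrib, prod_const, card_range]
  simp only [zpow_natCast, Nat.cast_zero, zpow_zero]
  ring

lemma alphaR_pos {q : ℝ} (hq : 1 < q) {n l : ℕ} (h : l ≤ n) : 0 < alphaR q n l :=
  prod_pos fun i hi => sub_pos.2 <|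
    zpow_lt_zpow_right₀ hq (by exact_mod_cast (mem_range.1 hi).trans_le h)

lemma gaussR_zero_right (q : ℝ) (n : ℕ) : gaussR q n 0 = 1 := by
  simp [gaussR, alphaR]

lemma gaussR_eq_zero_of_lt (q : ℝ) {n l : ℕ} (h : n < l) : gaussR q n l = 0 := by
  rw [gaussR, alphaR, prod_eq_zero (mem_range.2 h) (by simp), zero_div]

lemma gaussR_succ_succ {q : ℝ} (hq : 1 < q) (n l : ℕ) :
    gaussR q (n + 1) (l + 1) = gaussR q n (l + 1) + q ^ (n - l) * gaussR q n l := by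
  rcases lt_or_ge n l with hnl | hln
  · simp [gaussR_eq_zero_of_lt q hnl, gaussR_eq_zero_of_lt q (Nat.succ_lt_succ hnl),
      gaussR_eq_zero_of_lt q (hnl.trans (Nat.lt_succ_self l))]
  obtain ⟨k, rfl⟩ := Nat.exists_eq_add_of_le hln
  have hαll : alphaR q l l ≠ 0 := (alphaR_pos hq le_rfl).ne'
  have hql : q ^ (l + 1) - 1 ≠ 0 := (sub_pos.2 (one_lt_pow₀ hq l.succ_ne_zero)).ne'
  unfold gaussR
  rw [alphaR_succ_succ, alphaR_succ_succ, alphaR_succ, Nat.add_sub_cancel_left]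
  simp only [zpow_natCast]
  field_simp
  ring

/-- `hF` makes up for the truncated exponent `r - l`. -/
lemma sum_gaussR_pascal {q : ℝ} (hq : 1 < q) (r ν : ℕ) (F : ℕ → ℕ → ℝ)
    (hF : ∀ l k, r < l → F l k = 0) :
    ∑ l ∈ range (ν + 1),
        gaussR q ν l * q ^ ((ν - l) * (r - l)) * (q ^ (r - l) * F l (ν + 1 - l) + F (l + 1) (ν - l))
      = ∑ l ∈ range (ν + 2), gaussR q (ν + 1) l * q ^ ((ν + 1 - l) * (r - l)) * F l (ν + 1 - l) := by
  set A : ℕ → ℝ := fun l => gaussR q ν l * q ^ ((ν + 1 - l) * (r - l)) * F l (ν + 1 - l)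
  set B : ℕ → ℝ := fun l => gaussR q ν l * q ^ ((ν - l) * (r - l)) * F (l + 1) (ν - l)
  have hlhs : ∀ l ∈ range (ν + 1), gaussR q ν l * q ^ ((ν - l) * (r - l)) *
      (q ^ (r - l) * F l (ν + 1 - l) + F (l + 1) (ν - l)) = A l + B l := by
    intro l hl
    have hν : ν + 1 - l = ν - l + 1 := by have := mem_range.1 hl; omega
    simp only [A, B, hν, add_mul, pow_add, one_mul]
    ring
  have hpascal : ∀ l ∈ range (ν + 1), gaussR q (ν + 1) (l + 1) *
      q ^ ((ν + 1 - (l + 1)) * (r - (l + 1))) * F (l + 1) (ν + 1 - (l + 1)) = A (l + 1) + B l := by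
    intro l _
    simp only [A, B, Nat.add_sub_add_right, gaussR_succ_succ hq]
    rcases lt_or_ge l r with hlr | hrl
    · obtain ⟨c, rfl⟩ := Nat.exists_eq_add_of_lt hlr
      rw [show l + c + 1 - l = c + 1 by omega, show l + c + 1 - (l + 1) = c by omega]
      ring
    · simp [hF (l + 1) (ν - l) (by omega)]
  have hA : A (ν + 1) = 0 := by simp [A, gaussR_eq_zero_of_lt q (Nat.lt_succ_self ν)]
  rw [sum_congr rfl hlhs, sum_add_distrib, sum_range_succ' _ (ν + 1), sum_congr rfl hpascal,
    sum_add_distrib, sum_range_succ' A ν, sum_range_succ (fun l => A (l + 1)) ν, hA]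
  simp only [A, gaussR_zero_right]
  ring

lemma qderivCoeff_apply (q : ℝ) (r : ℕ) (f : ℤ → ℕ → ℝ) (m : ℤ) (i : ℕ) :
    qderivCoeff q r f m i = f m i * ((q ^ (r - i) - 1) / (q - 1)) :=
  rfl

@[simp]
lemma qderivCoeff_zero_deg (q : ℝ) (f : ℤ → ℕ → ℝ) : qderivCoeff q 0 f = 0 := by
  ext m i
  simp [qderivCoeff_apply]

@[simp]
lemma qderivCoeff_zero (q : ℝ) (r : ℕ) : qderivCoeff q r 0 = 0 := by
  ext m i
  simp [qderivCoeff_apply]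

@[simp]
lemma qmulCoeff_zero_left (q : ℝ) (s : ℕ) (g : ℤ → ℕ → ℝ) : qmulCoeff q s 0 g = 0 := by
  ext m u
  simp [qmulCoeff]

@[simp]
lemma qmulCoeff_zero_right (q : ℝ) (s : ℕ) (f : ℤ → ℕ → ℝ) : qmulCoeff q s f 0 = 0 := by
  ext m u
  simp [qmulCoeff]

lemma qdIter_succ' (q : ℝ) (n r : ℕ) (f : ℤ → ℕ → ℝ) :
    qdIter q r (n + 1) f = qderivCoeff q (r - n) (qdIter q r n f) := by
  induction n generalizing r f with
  | zero => rfl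
  | succ n ih =>
    change qdIter q (r - 1) (n + 1) (qderivCoeff q r f) = _
    rw [ih, Nat.sub_sub, Nat.add_comm 1 n]
    rfl

lemma qdIter_eq_zero_of_lt (q : ℝ) (f : ℤ → ℕ → ℝ) {r n : ℕ} (h : r < n) :
    qdIter q r n f = 0 := by
  obtain ⟨k, rfl⟩ := Nat.exists_eq_add_of_lt h
  rw [qdIter_succ', show r - (r + k) = 0 by omega, qderivCoeff_zero_deg]

lemma IsHomogeneous.qderivCoeff {q : ℝ} {r : ℕ} {f : ℤ → ℕ → ℝ} (hf : IsHomogeneous r f) :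
    IsHomogeneous (r - 1) (qderivCoeff q r f) := by
  intro m i hi
  rcases lt_or_ge r i with hri | hir
  · simp [qderivCoeff_apply, hf m i hri]
  · simp [qderivCoeff_apply, show r - i = 0 by omega]

lemma IsHomogeneous.qdIter {q : ℝ} {r : ℕ} {f : ℤ → ℕ → ℝ} (hf : IsHomogeneous r f) (n : ℕ) :
    IsHomogeneous (r - n) (qdIter q r n f) := by
  induction n with
  | zero => exact hf
  | succ n ih => rw [qdIter_succ', Nat.sub_succ]; exact ih.qderivCoeff

lemma qderivCoeff_qmulCoeff {q : ℝ} (hq : q ≠ 1) {r s : ℕ} {f g : ℤ → ℕ → ℝ}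
    (hf : IsHomogeneous r f) (hg : IsHomogeneous s g) (m : ℤ) (u : ℕ) :
    qderivCoeff q (r + s) (qmulCoeff q s f g) m u =
      q ^ r * qmulCoeff q (s - 1) f (qderivCoeff q s g) m u +
        qmulCoeff q s (qderivCoeff q r f) g m u := by
  have hq1 : q - 1 ≠ 0 := sub_ne_zero.2 hq
  simp only [qderivCoeff_apply, qmulCoeff, sum_mul, mul_sum, ← sum_add_distrib]
  refine sum_congr rfl fun i hi => ?_
  by_cases hfi : f m i = 0
  · simp [hfi]
  by_cases hgi : g (m - i) (u - i) = 0
  · simp [hgi]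
  have hir : i ≤ r := not_lt.1 (mt (hf m i) hfi)
  have hjs : u - i ≤ s := not_lt.1 (mt (hg _ _) hgi)
  have hiu : i ≤ u := Nat.lt_succ_iff.1 (mem_range.1 hi)
  obtain ⟨a, rfl⟩ := Nat.exists_eq_add_of_le hir
  obtain ⟨j, rfl⟩ := Nat.exists_eq_add_of_le hiu
  rw [Nat.add_sub_cancel_left] at hjs ⊢
  obtain ⟨b, rfl⟩ := Nat.exists_eq_add_of_le hjs
  rw [show i + a + (j + b) - (i + j) = a + b by omega, Nat.add_sub_cancel_left,
    Nat.add_sub_cancel_left]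
  rcases Nat.eq_zero_or_pos b with rfl | hb
  · simp
    ring
  · obtain ⟨c, hc⟩ : ∃ c, j + b = c + 1 := ⟨j + b - 1, by omega⟩
    rw [hc, Nat.add_sub_cancel]
    field_simp
    ring

lemma qderivCoeff_qmulCoeff_qdIter {q : ℝ} (hq : q ≠ 1) {r s : ℕ} {f g : ℤ → ℕ → ℝ}
    (hf : IsHomogeneous r f) (hg : IsHomogeneous s g) (l k : ℕ) (m : ℤ) (u : ℕ) :
    qderivCoeff q (r + s - (l + k)) (qmulCoeff q (s - k) (qdIter q r l f) (qdIter q s k g)) m u =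
      q ^ (r - l) * qmulCoeff q (s - (k + 1)) (qdIter q r l f) (qdIter q s (k + 1) g) m u +
        qmulCoeff q (s - k) (qdIter q r (l + 1) f) (qdIter q s k g) m u := by
  by_cases hl : r < l
  · simp [qdIter_eq_zero_of_lt q f hl, qdIter_eq_zero_of_lt q f (hl.trans l.lt_succ_self)]
  by_cases hk : s < k
  · simp [qdIter_eq_zero_of_lt q g hk, qdIter_eq_zero_of_lt q g (hk.trans k.lt_succ_self)]
  rw [show r + s - (l + k) = (r - l) + (s - k) by omega,
    qderivCoeff_qmulCoeff hq (hf.qdIter l) (hg.qdIter k), ← qdIter_succ', ← qdIter_succ',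
    Nat.sub_sub]

theorem qdIter_qmulCoeff {q : ℝ} (hq : 1 < q) {r s : ℕ} {f g : ℤ → ℕ → ℝ}
    (hf : IsHomogeneous r f) (hg : IsHomogeneous s g) (ν : ℕ) (m : ℤ) (u : ℕ) :
    qdIter q (r + s) ν (qmulCoeff q s f g) m u =
      ∑ l ∈ range (ν + 1), gaussR q ν l * q ^ ((ν - l) * (r - l)) *
        qmulCoeff q (s - (ν - l)) (qdIter q r l f) (qdIter q s (ν - l) g) m u := by
  induction ν with
  | zero => simp [qdIter, gaussR_zero_right]
  | succ ν ih =>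
    set F : ℕ → ℕ → ℝ := fun l k => qmulCoeff q (s - k) (qdIter q r l f) (qdIter q s k g) m u
    have hF : ∀ l k, r < l → F l k = 0 := fun l k hl => by simp [F, qdIter_eq_zero_of_lt q f hl]
    have hstep : ∀ l ∈ range (ν + 1),
        gaussR q ν l * q ^ ((ν - l) * (r - l)) * F l (ν - l) *
            ((q ^ (r + s - (ν + u)) - 1) / (q - 1)) =
          gaussR q ν l * q ^ ((ν - l) * (r - l)) *
            (q ^ (r - l) * F l (ν + 1 - l) + F (l + 1) (ν - l)) := by
      intro l hl
      have hlν : l ≤ ν := Nat.lt_succ_iff.1 (mem_range.1 hl)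
      have hderiv := qderivCoeff_qmulCoeff_qdIter hq.ne' hf hg l (ν - l) m u
      rw [qderivCoeff_apply, Nat.add_sub_cancel' hlν, Nat.sub_sub, ← Nat.sub_add_comm hlν] at hderiv
      simp only [F, mul_assoc, hderiv]
    rw [qdIter_succ', qderivCoeff_apply, ih, sum_mul, Nat.sub_sub]
    exact (sum_congr rfl hstep).trans (sum_gaussR_pascal hq r ν F hF)

theorem qLeibniz_general (q : ℕ) (hq : 2 ≤ q) (r s : ℕ) (f g : ℤ → ℕ → ℝ)
    (hf : ∀ m i, r < i → f m i = 0) (hg : ∀ m j, s < j → g m j = 0)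
    (ν : ℕ) (m : ℤ) (u : ℕ) :
    qdIter (q : ℝ) (r + s) ν (qmulCoeff (q : ℝ) s f g) m u =
      ∑ l ∈ Finset.range (ν + 1),
        gaussR (q : ℝ) ν l * (q : ℝ) ^ ((ν - l) * (r - l)) *
          qmulCoeff (q : ℝ) (s - (ν - l)) (qdIter (q : ℝ) r l f)
            (qdIter (q : ℝ) s (ν - l) g) m u :=
  qdIter_qmulCoeff (by exact_mod_cast hq) hf hg ν m u

/-- Leibniz rule for the `q`-product: for homogeneous polynomials `f` of
degree `r` and `g` of degree `s` and every `ν ≥ 1`,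
`(f*g)^{(ν)} = Σ_{l=0}^ν [ν,l]_q q^{(ν-l)(r-l)} (f^{(l)}) * (g^{(ν-l)})`. -/
theorem qLeibniz (q : ℕ) (hq : 2 ≤ q) (r s : ℕ) (f g : ℤ → ℕ → ℝ)
    (hf : ∀ m i, r < i → f m i = 0) (hg : ∀ m j, s < j → g m j = 0)
    (ν : ℕ) (hν : 1 ≤ ν) (m : ℤ) (u : ℕ) :
    qdIter (q : ℝ) (r + s) ν (qmulCoeff (q : ℝ) s f g) m u =
      ∑ l ∈ Finset.range (ν + 1),
        gaussR (q : ℝ) ν l * (q : ℝ) ^ ((ν - l) * (r - l)) *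
          qmulCoeff (q : ℝ) (s - (ν - l)) (qdIter (q : ℝ) r l f)
            (qdIter (q : ℝ) s (ν - l) g) m u :=
  qLeibniz_general q hq r s f g hf hg ν m u
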